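/- arXiv:1904.11808 — 3 statements merged into one kernel-verified Lean document; each statement's English description precedes it below -/
import Mathlib

section
/- Let A(±) = (1/2)(I ± σ₁) and B(±) = (1/2)(I ± σ₂) be sharp qubit observables on ℂ², where σ₁, σ₂ are Pauli matrices. If a quantum channel Λ : L(ℂ²) → L(K) can be written both as Λ(T) = Σ_ω tr[T A(ω)] η(ω) and as Λ(T) = Σ_ω tr[T B(ω)] ξ(ω) for some states η(±), ξ(±) on K, then η(+) = η(−) = (1/2)(ξ(+) + ξ(−)); in particular Λ is a completely depolarizing channel, i.e., Λ(T) = tr[T] η for a fixed state η. -/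
open Matrix Complex

/-- A completely positive map between matrix algebras (Kraus form). -/
def IsCP {n m : ℕ} (Φ : Matrix (Fin n) (Fin n) ℂ →ₗ[ℂ] Matrix (Fin m) (Fin m) ℂ) : Prop :=
  ∃ (k : ℕ) (V : Fin k → Matrix (Fin m) (Fin n) ℂ), ∀ T, Φ T = ∑ i, V i * T * (V i)ᴴ

/-- A quantum channel: completely positive and trace preserving. -/
def IsChannel {n m : ℕ} (Φ : Matrix (Fin n) (Fin n) ℂ →ₗ[ℂ] Matrix (Fin m) (Fin m) ℂ) : Prop :=
  IsCP Φ ∧ ∀ T, (Φ T).trace = T.trace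

/-- A quantum state: positive semidefinite with unit trace. -/
def IsState {m : ℕ} (ρ : Matrix (Fin m) (Fin m) ℂ) : Prop :=
  ρ.IsHermitian ∧ (∀ x : Fin m → ℂ, 0 ≤ (star x ⬝ᵥ ρ *ᵥ x).re) ∧ ρ.trace = 1

noncomputable def pauli1 : Matrix (Fin 2) (Fin 2) ℂ := !![0, 1; 1, 0]
noncomputable def pauli2 : Matrix (Fin 2) (Fin 2) ℂ := !![0, -I; I, 0]

/-- The sharp qubit observable `A(±) = (1/2)(I ± σ₁)`. -/
noncomputable def obsA : Bool → Matrix (Fin 2) (Fin 2) ℂ :=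
  fun b => (1 / 2 : ℂ) • (1 + (if b then 1 else -1 : ℂ) • pauli1)

/-- The sharp qubit observable `B(±) = (1/2)(I ± σ₂)`. -/
noncomputable def obsB : Bool → Matrix (Fin 2) (Fin 2) ℂ :=
  fun b => (1 / 2 : ℂ) • (1 + (if b then 1 else -1 : ℂ) • pauli2)

lemma obsA_eq (b : Bool) :
    obsA b = !![1/2, (if b then 1 else -1 : ℂ)/2; (if b then 1 else -1 : ℂ)/2, 1/2] := by
  ext i j
  fin_cases i <;> fin_cases j <;> cases b <;>
    simp [obsA, pauli1, Matrix.one_apply, Matrix.add_apply, Matrix.smul_apply] <;> ring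

lemma obsB_eq (b : Bool) :
    obsB b = !![1/2, (if b then 1 else -1 : ℂ) * (-I)/2;
                (if b then 1 else -1 : ℂ) * I/2, 1/2] := by
  ext i j
  fin_cases i <;> fin_cases j <;> cases b <;>
    simp [obsB, pauli2, Matrix.one_apply, Matrix.add_apply, Matrix.smul_apply] <;> ring

lemma traceA (T : Matrix (Fin 2) (Fin 2) ℂ) (b : Bool) :
    (T * obsA b).trace = (1/2) * T.trace + ((if b then 1 else -1 : ℂ)/2) * (T 0 1 + T 1 0) := by
  rw [obsA_eq]
  simp [Matrix.trace_fin_two, Matrix.mul_apply, Fin.sum_univ_two]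
  ring

lemma traceB (T : Matrix (Fin 2) (Fin 2) ℂ) (b : Bool) :
    (T * obsB b).trace
      = (1/2) * T.trace + ((if b then 1 else -1 : ℂ) * I/2) * (T 0 1 - T 1 0) := by
  rw [obsB_eq]
  simp [Matrix.trace_fin_two, Matrix.mul_apply, Fin.sum_univ_two]
  ring

/-- If a channel is measure-and-prepare with respect to both `A` and `B`, then
`η(+) = η(−) = (1/2)(ξ(+) + ξ(−))` and the channel is completely depolarizing. -/
theorem depolarizing_of_double_measure_and_prepare {m : ℕ}
    (Λ : Matrix (Fin 2) (Fin 2) ℂ →ₗ[ℂ] Matrix (Fin m) (Fin m) ℂ)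
    (hΛ : IsChannel Λ)
    (η ξ : Bool → Matrix (Fin m) (Fin m) ℂ)
    (hη : ∀ b, IsState (η b)) (hξ : ∀ b, IsState (ξ b))
    (hA : ∀ T, Λ T = ∑ b : Bool, (T * obsA b).trace • η b)
    (hB : ∀ T, Λ T = ∑ b : Bool, (T * obsB b).trace • ξ b) :
    (η true = η false ∧ η true = (1 / 2 : ℂ) • (ξ true + ξ false)) ∧
    ∃ η₀ : Matrix (Fin m) (Fin m) ℂ, IsState η₀ ∧ ∀ T, Λ T = T.trace • η₀ := by
  -- Applying both forms to σ₁ gives η(+) = η(−).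
  have hp1 : pauli1.trace = 0 ∧ pauli1 0 1 = 1 ∧ pauli1 1 0 = 1 := by
    refine ⟨?_, ?_, ?_⟩ <;> simp [pauli1, Matrix.trace_fin_two]
  have heqη : η true = η false := by
    have h1 := (hA pauli1).symm.trans (hB pauli1)
    simp only [Fin.sum_univ_two, Fintype.sum_bool, traceA, traceB,
      hp1.1, hp1.2.1, hp1.2.2] at h1
    norm_num at h1
    rwa [add_neg_eq_zero] at h1
  -- Applying both forms to 1 gives 2 η(+) = ξ(+) + ξ(−).
  have hone : (1 : Matrix (Fin 2) (Fin 2) ℂ).trace = 2 ∧ (1 : Matrix (Fin 2) (Fin 2) ℂ) 0 1 = 0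
      ∧ (1 : Matrix (Fin 2) (Fin 2) ℂ) 1 0 = 0 := by
    refine ⟨?_, ?_, ?_⟩ <;> simp [Matrix.trace_fin_two, Matrix.one_apply]
  have h2 := (hA 1).symm.trans (hB 1)
  simp only [Fintype.sum_bool, traceA, traceB, hone.1, hone.2.1, hone.2.2] at h2
  norm_num at h2
  have heqξ : η true = (1 / 2 : ℂ) • (ξ true + ξ false) := by
    rw [heqη]
    have : (2 : ℂ) • η false = ξ true + ξ false := by
      rw [two_smul]; rw [heqη] at h2; exact h2
    rw [← this, smul_smul]; norm_num
  refine ⟨⟨heqη, heqξ⟩, η true, hη true, fun T => ?_⟩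
  rw [hA T]
  simp only [Fintype.sum_bool, traceA, ← heqη, ← add_smul]
  congr 1
  norm_num
  ring
end

section
/- Let E be the sharp observable E(n) = |n⟩⟨n| (n = 1,2,3) on ℂ³, and let A, B be its coarse-grainings A(1) = E(1), A(2) = E(2)+E(3), B(1) = E(1)+E(2), B(2) = E(3). Then E is not a post-processing of any convex combination of post-processings of A and B: there do not exist stochastic matrices μ_i and weights t_i ≥ 0 summing to 1 with E = Σ_i t_i μ_i ∘ C_i where each C_i ∈ {A, B}. (Proof idea: every operator in the range of such a combination is a nonnegative combination of A(1), A(2), B(1), B(2); a rank-1 projection E(i) cannot equal a nonnegative combination involving the rank-2 effects with positive weight in the required way.) -/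
open Matrix

/-- The rank-one projections `E(n) = |n⟩⟨n|` on `ℂ³`. -/
def E (n : Fin 3) : Matrix (Fin 3) (Fin 3) ℂ := Matrix.single n n 1

/-- The coarse-graining `A(1) = E(1), A(2) = E(2) + E(3)`. -/
def A : Fin 2 → Matrix (Fin 3) (Fin 3) ℂ := fun ω => if ω = 0 then E 0 else E 1 + E 2

/-- The coarse-graining `B(1) = E(1) + E(2), B(2) = E(3)`. -/
def B : Fin 2 → Matrix (Fin 3) (Fin 3) ℂ := fun ω => if ω = 0 then E 0 + E 1 else E 2

/-! The real-linear functional `φ(M) = Re (M₀₀ + M₂₂ - M₁₁)` separates `E(1)` from the convex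
cone generated by the effects of `A` and `B`: it is nonnegative on each `A(ω)` and `B(ω)`, hence on
every combination `∑ᵢ ∑_ω tᵢ μᵢ(1, ω) Cᵢ(ω)` with nonnegative coefficients, while `φ(E(1)) = -1`. -/

def separatingFunctional : Matrix (Fin 3) (Fin 3) ℂ →ₗ[ℝ] ℝ where
  toFun M := (M 0 0 + M 2 2 - M 1 1).re
  map_add' M N := by simp only [Matrix.add_apply, Complex.add_re, Complex.sub_re]; ring
  map_smul' r M := by simp only [Matrix.smul_apply, Complex.real_smul, Complex.re_ofReal_mul,
    Complex.add_re, Complex.sub_re, RingHom.id_apply, smul_eq_mul]; ring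

lemma separatingFunctional_E_one : separatingFunctional (E 1) = -1 := by
  simp [separatingFunctional, E]

lemma separatingFunctional_coarse_nonneg (b : Bool) (ω : Fin 2) :
    0 ≤ separatingFunctional (if b then A ω else B ω) := by
  cases b <;> fin_cases ω <;> simp [separatingFunctional, A, B, E]

lemma LinearMap.map_sum_sum_smul_nonneg {M ι κ : Type*} [AddCommMonoid M] [Module ℝ M]
    [Fintype ι] [Fintype κ] (φ : M →ₗ[ℝ] ℝ) (a : ι → κ → ℝ) (x : ι → κ → M)
    (ha : ∀ i j, 0 ≤ a i j) (hx : ∀ i j, 0 ≤ φ (x i j)) :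
    0 ≤ φ (∑ i, ∑ j, a i j • x i j) := by
  simp only [map_sum, map_smul, smul_eq_mul]
  exact Finset.sum_nonneg fun i _ => Finset.sum_nonneg fun j _ => mul_nonneg (ha i j) (hx i j)

/-- The sharp observable `E` cannot be simulated by `{A, B}`: it is not a convex
combination of post-processings of `A` and `B`. -/
theorem E_not_simulable_by_A_B :
    ¬ ∃ (k : ℕ) (t : Fin k → ℝ) (μ : Fin k → Fin 3 → Fin 2 → ℝ) (c : Fin k → Bool),
      (∀ i, 0 ≤ t i) ∧ (∑ i, t i = 1) ∧
      (∀ i ω' ω, 0 ≤ μ i ω' ω) ∧ (∀ i ω, ∑ ω', μ i ω' ω = 1) ∧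
      (∀ n : Fin 3, E n =
        ∑ i, ∑ ω : Fin 2, ((t i * μ i n ω : ℝ) : ℂ) • (if c i then A ω else B ω)) := by
  rintro ⟨k, t, μ, c, ht, -, hμ, -, hE⟩
  have hnonneg : 0 ≤ separatingFunctional (E 1) := by
    simp only [hE 1, Complex.coe_smul]
    exact separatingFunctional.map_sum_sum_smul_nonneg _ _
      (fun i ω => mul_nonneg (ht i) (hμ i 1 ω)) (fun i ω => separatingFunctional_coarse_nonneg _ ω)
  rw [separatingFunctional_E_one] at hnonneg
  norm_num at hnonneg
end

section
/- For unbiased dichotomic qubit observables A_a(±) = (1/2)(I ± a·σ) with ‖a‖ ≤ 1, and with the known criterion that A_a and A_b are jointly measurable iff ‖a+b‖ + ‖a−b‖ ≤ 2: for 0 ≤ λ ≤ 1, the set of unbiased observables jointly measurable with every member of A_λ = {A_a : ‖a‖ ≤ λ} is exactly A_{√(1−λ²)}, i.e., A_b is jointly measurable with every A_a with ‖a‖ ≤ λ if and only if ‖b‖ ≤ √(1−λ²). -/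
/-!
By the parallelogram law, `(‖a + b‖ + ‖a - b‖)² ≤ 2 (‖a + b‖² + ‖a - b‖²) = 4 (‖a‖² + ‖b‖²)`,
with equality exactly when `‖a + b‖ = ‖a - b‖`, i.e. when `a ⟂ b`. Over the ball `‖a‖ ≤ λ` the
quantity `‖a + b‖ + ‖a - b‖` therefore has maximum `2 √(λ² + ‖b‖²)`, attained at a vector of norm `λ`
orthogonal to `b` (which exists in dimension at least two), and it stays below `2` iff
`‖b‖² ≤ 1 - λ²`.
-/

open Module Real
open scoped InnerProductSpace

variable {E : Type*} [NormedAddCommGroup E] [InnerProductSpace ℝ E]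

theorem exists_norm_eq_inner_eq_zero [FiniteDimensional ℝ E] (hE : 2 ≤ finrank ℝ E) (b : E)
    {r : ℝ} (hr : 0 ≤ r) : ∃ a : E, ‖a‖ = r ∧ ⟪a, b⟫_ℝ = 0 := by
  have hspan : finrank ℝ (ℝ ∙ b) ≤ 1 := by simpa using finrank_span_le_card ({b} : Set E)
  have hsum := (ℝ ∙ b).finrank_add_finrank_orthogonal
  have : Nontrivial (ℝ ∙ b)ᗮ := Module.nontrivial_of_finrank_pos (R := ℝ) (by omega)
  obtain ⟨a, ha⟩ := exists_norm_eq (ℝ ∙ b)ᗮ hr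
  exact ⟨a, ha, Submodule.mem_orthogonal_singleton_iff_inner_left.mp a.2⟩

theorem norm_add_add_norm_sub_le_two_mul_sqrt (a b : E) :
    ‖a + b‖ + ‖a - b‖ ≤ 2 * √(‖a‖ ^ 2 + ‖b‖ ^ 2) := by
  have hpar := parallelogram_law_with_norm ℝ a b
  have hsq := sq_sqrt (by positivity : 0 ≤ ‖a‖ ^ 2 + ‖b‖ ^ 2)
  nlinarith [sq_nonneg (‖a + b‖ - ‖a - b‖), norm_nonneg (a + b), norm_nonneg (a - b),
    sqrt_nonneg (‖a‖ ^ 2 + ‖b‖ ^ 2)]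

theorem norm_add_add_norm_sub_of_inner_eq_zero {a b : E} (h : ⟪a, b⟫_ℝ = 0) :
    ‖a + b‖ + ‖a - b‖ = 2 * √(‖a‖ ^ 2 + ‖b‖ ^ 2) := by
  rw [norm_add_eq_sqrt_iff_real_inner_eq_zero.mpr h, norm_sub_eq_sqrt_iff_real_inner_eq_zero.mpr h,
    ← sq, ← sq]
  ring

theorem forall_norm_le_norm_add_add_norm_sub_le_two_iff [FiniteDimensional ℝ E]
    (hE : 2 ≤ finrank ℝ E) {lam : ℝ} (hlam : 0 ≤ lam) (b : E) :
    (∀ a : E, ‖a‖ ≤ lam → ‖a + b‖ + ‖a - b‖ ≤ 2) ↔ ‖b‖ ^ 2 ≤ 1 - lam ^ 2 := by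
  rw [le_sub_iff_add_le', ← sqrt_le_one]
  constructor
  · intro hall
    obtain ⟨a, ha, hab⟩ := exists_norm_eq_inner_eq_zero hE b hlam
    have := hall a ha.le
    rw [norm_add_add_norm_sub_of_inner_eq_zero hab, ha] at this
    linarith
  · intro hb a ha
    have ha2 : ‖a‖ ^ 2 ≤ lam ^ 2 := pow_le_pow_left₀ (norm_nonneg a) ha 2
    calc ‖a + b‖ + ‖a - b‖ ≤ 2 * √(‖a‖ ^ 2 + ‖b‖ ^ 2) := norm_add_add_norm_sub_le_two_mul_sqrt a b
      _ ≤ 2 * √(lam ^ 2 + ‖b‖ ^ 2) := by gcongr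
      _ ≤ 2 := by linarith

/-- Busch's criterion: for unbiased qubit observables `A_a`, with joint measurability of
`A_a` and `A_b` given by `‖a+b‖ + ‖a−b‖ ≤ 2`, the observable `A_b` is jointly measurable
with every `A_a`, `‖a‖ ≤ λ`, iff `‖b‖ ≤ √(1 − λ²)`. -/
theorem busch_joint_measurability (jm : EuclideanSpace ℝ (Fin 3) → EuclideanSpace ℝ (Fin 3) → Prop)
    (h_crit : ∀ a b : EuclideanSpace ℝ (Fin 3), ‖a‖ ≤ 1 → ‖b‖ ≤ 1 →
      (jm a b ↔ ‖a + b‖ + ‖a - b‖ ≤ 2))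
    (lam : ℝ) (hlam0 : 0 ≤ lam) (hlam1 : lam ≤ 1)
    (b : EuclideanSpace ℝ (Fin 3)) (hb : ‖b‖ ≤ 1) :
    (∀ a : EuclideanSpace ℝ (Fin 3), ‖a‖ ≤ lam → jm a b) ↔
      ‖b‖ ≤ Real.sqrt (1 - lam ^ 2) := by
  have hdim : 2 ≤ finrank ℝ (EuclideanSpace ℝ (Fin 3)) := by simp
  have hlam_sq : 0 ≤ 1 - lam ^ 2 := sub_nonneg.mpr (pow_le_one₀ hlam0 hlam1)
  rw [le_sqrt (norm_nonneg b) hlam_sq,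
    ← forall_norm_le_norm_add_add_norm_sub_le_two_iff hdim hlam0 b]
  exact forall₂_congr fun a ha => h_crit a b (ha.trans hlam1) hb
end
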